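/- Let γ^{(1)} and γ^{(2)} be two families of histograms each satisfying the bound condition, such that γ^{(1)}_{n,n'} ≼ γ^{(2)}_{n,n'} for all n' ≥ 1 and 0 ≤ n ≤ n'. Then for every L ≥ 2 and all widths n_0, n_1, …, n_{L−1} ≥ 1, ‖B^{(γ^{(1)})}_{n_{L−1}} M_{n_{L−2},n_{L−1}} ⋯ B^{(γ^{(1)})}_{n_1} M_{n_0,n_1} e^{n_0}‖₁ ≤ ‖B^{(γ^{(2)})}_{n_{L−1}} M_{n_{L−2},n_{L−1}} ⋯ B^{(γ^{(2)})}_{n_1} M_{n_0,n_1} e^{n_0}‖₁, where ‖·‖₁ is the sum of entries. -/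

import Mathlib

open scoped Classical

noncomputable section

/-- Tail sum `Σ_{j ≥ J} v j` of a finitely supported histogram `v : ℕ →₀ ℕ`. -/
def tailSum (v : ℕ →₀ ℕ) (J : ℕ) : ℕ :=
  ∑ j ∈ v.support.filter (fun j => J ≤ j), v j

/-- Order relation on histograms: `v ≼ w` iff every tail sum of `v` is at most that of `w`. -/
def HistLE (v w : ℕ →₀ ℕ) : Prop :=
  ∀ J : ℕ, tailSum v J ≤ tailSum w J

/-- Downward move: `dm v 0 = 0` and `dm v (i+1) = v i`. -/
def dm (v : ℕ →₀ ℕ) : ℕ →₀ ℕ :=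
  Finsupp.embDomain ⟨Nat.succ, Nat.succ_injective⟩ v

/-- Clipping `cl_k`: keeps values below `k`, puts the tail sum at `k`, zero above `k`. -/
def clip (k : ℕ) (v : ℕ →₀ ℕ) : ℕ →₀ ℕ :=
  Finsupp.onFinset (Finset.range (k + 1))
    (fun i => if i < k then v i else if i = k then tailSum v k else 0)
    (by
      intro a ha
      simp only [Finset.mem_range]
      by_contra hc
      push_neg at hc
      have h1 : ¬ a < k := by omega
      have h2 : a ≠ k := by omega
      simp [h1, h2] at ha)

/-- Activation pattern of a ReLU layer `h ∈ RL(n, n')` given by `W, b`. -/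
def layerPattern {n n' : ℕ} (W : Matrix (Fin n') (Fin n) ℝ) (b : Fin n' → ℝ)
    (x : Fin n → ℝ) : Fin n' → Bool :=
  fun j => decide (0 < W.mulVec x j + b j)

/-- `|s|₁`, the number of ones in a `Bool`-valued pattern. -/
def bweight {m : ℕ} (s : Fin m → Bool) : ℕ :=
  (Finset.univ.filter (fun j => s j = true)).card

/-- Activation histogram of a ReLU layer: `i ↦ #{achievable patterns s with |s|₁ = i}`. -/
def actHist {n n' : ℕ} (W : Matrix (Fin n') (Fin n) ℝ) (b : Fin n' → ℝ) : ℕ →₀ ℕ :=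
  Finsupp.onFinset (Finset.range (n' + 1))
    (fun i => (Finset.univ.filter (fun s : Fin n' → Bool =>
        (∃ x, layerPattern W b x = s) ∧ bweight s = i)).card)
    (by
      intro a ha
      simp only [Finset.mem_range]
      by_contra hc
      push_neg at hc
      apply ha
      rw [Finset.card_eq_zero, Finset.filter_eq_empty_iff]
      intro s _
      rintro ⟨-, rfl⟩
      have hle : bweight s ≤ n' :=
        le_trans (Finset.card_filter_le _ _) (by simp)
      omega)

/-- The bound condition for a family of histograms `γ = (γ_{n,n'})`. -/
def BoundCondition (γ : ℕ → ℕ → (ℕ →₀ ℕ)) : Prop :=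
  ∀ n' : ℕ, 1 ≤ n' → ∀ n : ℕ, n ≤ n' →
    (∀ (W : Matrix (Fin n') (Fin n) ℝ) (b : Fin n' → ℝ),
        HistLE (actHist W b) (γ n n')) ∧
    (∀ ntil : ℕ, n ≤ ntil → ntil ≤ n' → HistLE (γ n n') (γ ntil n'))

/-- `ℓ₁`-norm (sum of entries) of a histogram. -/
def l1 (v : ℕ →₀ ℕ) : ℕ := ∑ j ∈ v.support, v j

/-- The action of the matrix `B^{(γ)}_{n'}` on a histogram supported on `{0, …, n'}`:
`(B v)(i) = Σ_{j=0}^{n'} v(j) ⬝ (cl_j(γ_{j,n'}))(i)`. -/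
def Bop (γ : ℕ → ℕ → (ℕ →₀ ℕ)) (n' : ℕ) (v : ℕ →₀ ℕ) : ℕ →₀ ℕ :=
  ∑ j ∈ Finset.range (n' + 1), v j • clip j (γ j n')

/-- `iterBound γ n i` is the histogram
`B^{(γ)}_{n_i} M_{n_{i-1},n_i} ⋯ B^{(γ)}_{n_1} M_{n_0,n_1} e^{n_0}`, where the action of
`M_{n,n'}` on a histogram supported on `{0, …, n}` is the clipping `cl_{n'}`. -/
def iterBound (γ : ℕ → ℕ → (ℕ →₀ ℕ)) (n : ℕ → ℕ) : ℕ → (ℕ →₀ ℕ)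
  | 0 => Finsupp.single (n 0) 1
  | i + 1 => Bop γ (n (i + 1)) (clip (n (i + 1)) (iterBound γ n i))

/-!
The histograms `iterBound γ n i` are built by alternately clipping and applying `B^{(γ)}`, and
`ℓ₁` is the tail sum at `0`, so it suffices to show `iterBound γ₁ n i ≼ iterBound γ₂ n i` by
induction on `i`. Clipping preserves `≼`. Replacing `γ₂` by `γ₁` in `B` only lowers every tail
sum. And `B^{(γ₁)}_{n'}` preserves `≼`: the tail sum of `B v` at `J` is `∑ⱼ v j * c j` with
`c j` the tail sum of `cl_j(γ₁_{j,n'})` at `J`, which increases with `j` by the monotonicity half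
of the bound condition, and by Abel summation such a sum is monotone in `v` for `≼`.
-/

lemma tailSum_eq_sum_of_support_subset {v : ℕ →₀ ℕ} {s : Finset ℕ} (hs : v.support ⊆ s)
    (J : ℕ) : tailSum v J = ∑ j ∈ s.filter (J ≤ ·), v j :=
  Finset.sum_subset (Finset.filter_subset_filter _ hs) fun j hj hj' => by
    simpa [(Finset.mem_filter.mp hj).2] using hj'

lemma tailSum_eq_sum_Ico {v : ℕ →₀ ℕ} {m : ℕ} (hv : v.support ⊆ Finset.range (m + 1))
    (J : ℕ) : tailSum v J = ∑ j ∈ Finset.Ico J (m + 1), v j := by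
  rw [tailSum_eq_sum_of_support_subset hv]
  congr 1
  ext j
  simp only [Finset.mem_filter, Finset.mem_range, Finset.mem_Ico]
  omega

lemma tailSum_zero_eq_l1 (v : ℕ →₀ ℕ) : tailSum v 0 = l1 v := by
  simp [tailSum, l1]

lemma tailSum_eq_add_tailSum_succ (v : ℕ →₀ ℕ) (J : ℕ) :
    tailSum v J = v J + tailSum v (J + 1) := by
  have hs := Finset.subset_insert J v.support
  have hfilter : (insert J v.support).filter (J ≤ ·)
      = insert J ((insert J v.support).filter (J + 1 ≤ ·)) := by
    ext j
    simp only [Finset.mem_filter, Finset.mem_insert]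
    grind
  rw [tailSum_eq_sum_of_support_subset hs, tailSum_eq_sum_of_support_subset hs, hfilter,
    Finset.sum_insert (by simp)]

lemma tailSum_eq_sum_Ico_add_tailSum {J k : ℕ} (h : J ≤ k) (v : ℕ →₀ ℕ) :
    tailSum v J = ∑ j ∈ Finset.Ico J k, v j + tailSum v k := by
  induction h using Nat.decreasingInduction with
  | of_succ J hJ ih =>
    rw [tailSum_eq_add_tailSum_succ, ih, Finset.sum_eq_sum_Ico_succ_bot hJ, add_assoc]
  | self => simp

lemma tailSum_add (v w : ℕ →₀ ℕ) (J : ℕ) :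
    tailSum (v + w) J = tailSum v J + tailSum w J := by
  rw [tailSum_eq_sum_of_support_subset Finsupp.support_add,
    tailSum_eq_sum_of_support_subset Finset.subset_union_left,
    tailSum_eq_sum_of_support_subset Finset.subset_union_right, ← Finset.sum_add_distrib]
  rfl

def tailSumHom (J : ℕ) : (ℕ →₀ ℕ) →+ ℕ :=
  { toFun := (tailSum · J)
    map_zero' := by simp [tailSum]
    map_add' := fun v w => tailSum_add v w J }

lemma clip_apply (k : ℕ) (v : ℕ →₀ ℕ) (i : ℕ) :
    clip k v i = if i < k then v i else if i = k then tailSum v k else 0 := rfl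

lemma tailSum_clip (k : ℕ) (v : ℕ →₀ ℕ) (J : ℕ) :
    tailSum (clip k v) J = if J ≤ k then tailSum v J else 0 := by
  rw [tailSum_eq_sum_Ico (v := clip k v) (m := k) Finsupp.support_onFinset_subset]
  split_ifs with hJ
  · rw [Finset.sum_Ico_succ_top hJ, tailSum_eq_sum_Ico_add_tailSum hJ, clip_apply k v k]
    simp only [lt_irrefl, if_false, if_true]
    congr 1
    exact Finset.sum_congr rfl fun j hj => if_pos (Finset.mem_Ico.mp hj).2
  · rw [Finset.Ico_eq_empty (by omega), Finset.sum_empty]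

lemma tailSum_Bop (γ : ℕ → ℕ → (ℕ →₀ ℕ)) (n' : ℕ) (v : ℕ →₀ ℕ) (J : ℕ) :
    tailSum (Bop γ n' v) J
      = ∑ j ∈ Finset.range (n' + 1), v j * tailSum (clip j (γ j n')) J := by
  change tailSumHom J (Bop γ n' v) = _
  simp [Bop, map_sum, map_nsmul, tailSumHom]

lemma HistLE.refl (v : ℕ →₀ ℕ) : HistLE v v := fun _ => le_rfl

lemma HistLE.trans {u v w : ℕ →₀ ℕ} (huv : HistLE u v) (hvw : HistLE v w) : HistLE u w :=
  fun J => (huv J).trans (hvw J)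

lemma HistLE.clip {v w : ℕ →₀ ℕ} (h : HistLE v w) (k : ℕ) : HistLE (clip k v) (clip k w) := by
  intro J
  rw [tailSum_clip, tailSum_clip]
  split_ifs
  exacts [h J, le_rfl]

lemma sum_mul_le_sum_mul_of_tail_le {m : ℕ} {x y c : ℕ → ℕ} (hc : ∀ t < m, c t ≤ c (t + 1))
    (hxy : ∀ t ≤ m, ∑ j ∈ Finset.Ico t (m + 1), x j ≤ ∑ j ∈ Finset.Ico t (m + 1), y j) :
    ∑ j ∈ Finset.range (m + 1), x j * c j ≤ ∑ j ∈ Finset.range (m + 1), y j * c j := by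
  -- Abel summation against the (nonnegative) increments `d` of `c`.
  let d : ℕ → ℕ := fun t => if t = 0 then c 0 else c t - c (t - 1)
  have hc_eq : ∀ j ≤ m, c j = ∑ t ∈ Finset.range (j + 1), d t := by
    intro j hj
    induction j with
    | zero => simp [d]
    | succ j ih =>
      rw [Finset.sum_range_succ, ← ih (by omega)]
      have := hc j (by omega)
      simp only [d, Nat.succ_ne_zero, if_false, Nat.add_sub_cancel]
      omega
  have abel : ∀ z : ℕ → ℕ, ∑ j ∈ Finset.range (m + 1), z j * c j
      = ∑ t ∈ Finset.range (m + 1), d t * ∑ j ∈ Finset.Ico t (m + 1), z j := by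
    intro z
    calc ∑ j ∈ Finset.range (m + 1), z j * c j
        = ∑ j ∈ Finset.Ico 0 (m + 1), ∑ t ∈ Finset.Ico 0 (j + 1), d t * z j := by
          rw [← Finset.range_eq_Ico]
          refine Finset.sum_congr rfl fun j hj => ?_
          rw [hc_eq j (Nat.lt_succ_iff.mp (Finset.mem_range.mp hj)), ← Finset.range_eq_Ico,
            Finset.mul_sum]
          exact Finset.sum_congr rfl fun _ _ => mul_comm _ _
      _ = ∑ t ∈ Finset.range (m + 1), d t * ∑ j ∈ Finset.Ico t (m + 1), z j := by
          rw [← Finset.sum_Ico_Ico_comm, ← Finset.range_eq_Ico]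
          simp only [Finset.mul_sum]
  rw [abel x, abel y]
  exact Finset.sum_le_sum fun t ht =>
    Nat.mul_le_mul_left _ (hxy t (Nat.lt_succ_iff.mp (Finset.mem_range.mp ht)))

lemma HistLE.Bop {γ : ℕ → ℕ → (ℕ →₀ ℕ)} {n' : ℕ}
    (hγ : ∀ t < n', HistLE (γ t n') (γ (t + 1) n')) {v w : ℕ →₀ ℕ}
    (hv : v.support ⊆ Finset.range (n' + 1)) (hw : w.support ⊆ Finset.range (n' + 1))
    (hvw : HistLE v w) : HistLE (Bop γ n' v) (Bop γ n' w) := by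
  intro J
  -- The coefficients `j ↦ tailSum (clip j (γ j n')) J` increase with `j`.
  rw [tailSum_Bop, tailSum_Bop]
  refine sum_mul_le_sum_mul_of_tail_le (fun t ht => ?_) fun t _ => ?_
  · rw [tailSum_clip, tailSum_clip]
    split_ifs
    exacts [hγ t ht J, by omega, Nat.zero_le _, le_rfl]
  · rw [← tailSum_eq_sum_Ico hv, ← tailSum_eq_sum_Ico hw]
    exact hvw t

lemma Bop_histLE_Bop_of_histLE {γ₁ γ₂ : ℕ → ℕ → (ℕ →₀ ℕ)} {n' : ℕ}
    (hγ : ∀ j ≤ n', HistLE (γ₁ j n') (γ₂ j n')) (v : ℕ →₀ ℕ) :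
    HistLE (Bop γ₁ n' v) (Bop γ₂ n' v) := by
  intro J
  rw [tailSum_Bop, tailSum_Bop]
  exact Finset.sum_le_sum fun j hj => Nat.mul_le_mul_left _
    ((hγ j (Nat.lt_succ_iff.mp (Finset.mem_range.mp hj))).clip j J)

lemma iterBound_histLE_iterBound {γ₁ γ₂ : ℕ → ℕ → (ℕ →₀ ℕ)} {n : ℕ → ℕ} {i : ℕ}
    (hmono : ∀ l, 0 < l → l ≤ i → ∀ t < n l, HistLE (γ₁ t (n l)) (γ₁ (t + 1) (n l)))
    (hγ : ∀ l, 0 < l → l ≤ i → ∀ t ≤ n l, HistLE (γ₁ t (n l)) (γ₂ t (n l))) :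
    HistLE (iterBound γ₁ n i) (iterBound γ₂ n i) := by
  induction i with
  | zero => exact HistLE.refl _
  | succ i ih =>
    have ih' := ih (fun l hl hli => hmono l hl (by omega)) fun l hl hli => hγ l hl (by omega)
    exact ((ih'.clip _).Bop (hmono _ i.succ_pos le_rfl) Finsupp.support_onFinset_subset
      Finsupp.support_onFinset_subset).trans
      (Bop_histLE_Bop_of_histLE (hγ _ i.succ_pos le_rfl) _)

theorem statement5_general (γ1 γ2 : ℕ → ℕ → (ℕ →₀ ℕ))
    (h1 : BoundCondition γ1)
    (hle : ∀ n' : ℕ, 1 ≤ n' → ∀ n : ℕ, n ≤ n' → HistLE (γ1 n n') (γ2 n n'))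
    (L : ℕ) (n : ℕ → ℕ) (hn : ∀ i : ℕ, i < L → 1 ≤ n i) :
    l1 (iterBound γ1 n (L - 1)) ≤ l1 (iterBound γ2 n (L - 1)) := by
  have hwidth : ∀ l, l ≤ L - 1 → 0 < l → 1 ≤ n l := fun l hl hl0 => hn l (by omega)
  have hmono : ∀ l, 0 < l → l ≤ L - 1 → ∀ t < n l, HistLE (γ1 t (n l)) (γ1 (t + 1) (n l)) :=
    fun l hl0 hl t ht => (h1 (n l) (hwidth l hl hl0) t ht.le).2 (t + 1) t.le_succ ht
  have hγ : ∀ l, 0 < l → l ≤ L - 1 → ∀ t ≤ n l, HistLE (γ1 t (n l)) (γ2 t (n l)) :=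
    fun l hl0 hl => hle (n l) (hwidth l hl hl0)
  rw [← tailSum_zero_eq_l1, ← tailSum_zero_eq_l1]
  exact iterBound_histLE_iterBound hmono hγ 0

/-- Theorem 3: if two families of histograms satisfy the bound condition and
`γ^{(1)}_{n,n'} ≼ γ^{(2)}_{n,n'}` everywhere, then the matrix-computation upper bound for
any widths computed with `γ^{(1)}` is at most the one computed with `γ^{(2)}`. -/
theorem statement5 (γ1 γ2 : ℕ → ℕ → (ℕ →₀ ℕ))
    (h1 : BoundCondition γ1) (h2 : BoundCondition γ2)
    (hle : ∀ n' : ℕ, 1 ≤ n' → ∀ n : ℕ, n ≤ n' → HistLE (γ1 n n') (γ2 n n'))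
    (L : ℕ) (hL : 2 ≤ L) (n : ℕ → ℕ) (hn : ∀ i : ℕ, i < L → 1 ≤ n i) :
    l1 (iterBound γ1 n (L - 1)) ≤ l1 (iterBound γ2 n (L - 1)) :=
  statement5_general γ1 γ2 h1 hle L n hn
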